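/- Let k₀ > 0 and let ω : ℝ → ℝ be defined by ω(k) = k·|k| (equivalently ω(k) = sign(k)·k²). Then for every choice of signs j₁, j₂, η ∈ {−1, 1}, every real solution k of the resonance equation ω(k) − j₁·j₂·ω(k − η·k₀) + j₁·ω(η·k₀) = 0 satisfies k = 0, k = k₀, or k = −k₀. -/
import Mathlib


set_option maxHeartbeats 2000000 in
/-- For the beam equation dispersion relation ω(k) = k·|k| (= sign(k)·k²), all real
solutions of the three-wave resonance equation
ω(k) − j₁j₂ω(k − ηk₀) + j₁ω(ηk₀) = 0, with j₁, j₂, η ∈ {±1}, satisfy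
k = 0, k = k₀ or k = −k₀. -/
theorem beam_resonances_only_at_zero_and_k0
    (k₀ : ℝ) (hk₀ : 0 < k₀)
    (ω : ℝ → ℝ) (hω : ∀ k, ω k = k * |k|)
    (j₁ j₂ η : ℝ)
    (hj₁ : j₁ = 1 ∨ j₁ = -1) (hj₂ : j₂ = 1 ∨ j₂ = -1) (hη : η = 1 ∨ η = -1)
    (k : ℝ)
    (hres : ω k - j₁ * j₂ * ω (k - η * k₀) + j₁ * ω (η * k₀) = 0) :
    k = 0 ∨ k = k₀ ∨ k = -k₀ := by
  have hηk : |η * k₀| = k₀ := by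
    rcases hη with rfl | rfl <;> simp [abs_of_pos hk₀, abs_of_nonneg hk₀.le]
  simp only [hω, hηk] at hres
  rcases abs_cases k with ⟨h1, h1'⟩ | ⟨h1, h1'⟩ <;>
    rcases abs_cases (k - η * k₀) with ⟨h2, h2'⟩ | ⟨h2, h2'⟩ <;>
    rw [h1, h2] at hres <;>
    rcases hj₁ with rfl | rfl <;> rcases hj₂ with rfl | rfl <;> rcases hη with rfl | rfl
  all_goals
    first
      | (left; nlinarith [mul_pos hk₀ hk₀])
      | (right; left; nlinarith [mul_pos hk₀ hk₀])
      | (right; right; nlinarith [mul_pos hk₀ hk₀])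
      | (exfalso; nlinarith [mul_pos hk₀ hk₀])
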